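/- (Failure of the central limit theorem for the heavy-tailed state; core of Proposition 4.8(c).) Let μ be the Borel probability measure on ℝ with density x ↦ (1/2)·(1 + x²)^{−3/2} with respect to Lebesgue measure, and let φ_μ(t) := ∫_ℝ e^{itx} dμ(x) be its characteristic function. Then for every real t ≠ 0, lim_{n→∞} (φ_μ(t/√n))^n = 0. -/

import Mathlib

/-!
The density decays like `|x|⁻³`, so the truncated second moment `∫_{|x| ≤ R} x² dμ` grows like
`log R`. As `μ` is symmetric, `φ_μ` is real, and `1 - cos y ≥ (2/π²) y²` for `|y| ≤ π` turns this
growth into `0 ≤ φ_μ(s) ≤ 1 - c s² log (1/|s|)` for small `s`. Hence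
`|φ_μ(t/√n)|ⁿ ≤ exp (-c t² log (√n/|t|)) → 0`: the logarithmic divergence of the variance beats
the `1/n` scaling.
-/

open MeasureTheory Filter

noncomputable section

def heavyTailedMeasure : Measure ℝ :=
  (volume : Measure ℝ).withDensity
    (fun x => ENNReal.ofReal ((1 / 2) * (1 + x ^ 2) ^ (-(3 / 2) : ℝ)))

def heavyTailedCharFun (t : ℝ) : ℂ :=
  ∫ x, Complex.exp (Complex.I * (t * x)) ∂heavyTailedMeasure

open Real Set
open scoped ENNReal Topology

section CharFun

variable {E : Type*} [NormedAddCommGroup E] [InnerProductSpace ℝ E] [MeasurableSpace E]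
  [BorelSpace E] {μ : Measure E}

lemma charFun_neg_of_isNegInvariant [μ.IsNegInvariant] (t : E) :
    charFun μ (-t) = charFun μ t := by
  simp only [charFun_apply]
  rw [← integral_neg_eq_self]
  simp [inner_neg_left, inner_neg_right]

lemma ofReal_re_charFun [μ.IsNegInvariant] (t : E) : ((charFun μ t).re : ℂ) = charFun μ t := by
  rw [← Complex.conj_eq_iff_re, ← charFun_neg, charFun_neg_of_isNegInvariant]

lemma eventually_norm_charFun_eq_re [SecondCountableTopology E] [IsProbabilityMeasure μ]
    [μ.IsNegInvariant] : ∀ᶠ t in 𝓝 0, ‖charFun μ t‖ = (charFun μ t).re := by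
  have hre : Tendsto (fun t => (charFun μ t).re) (𝓝 0) (𝓝 1) := by
    simpa [Function.comp_def] using
      (Complex.continuous_re.comp (continuous_charFun (μ := μ))).tendsto 0
  filter_upwards [hre.eventually (eventually_ge_nhds zero_lt_one)] with t ht
  rw [← ofReal_re_charFun, Complex.norm_real, Real.norm_of_nonneg ht, Complex.ofReal_re]

end CharFun

lemma integrable_one_sub_cos_mul (μ : Measure ℝ) [IsFiniteMeasure μ] (t : ℝ) :
    Integrable (fun x => 1 - cos (t * x)) μ :=
  (integrable_const 2).mono' (by fun_prop) (.of_forall fun x => by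
    rw [Real.norm_eq_abs, abs_le]
    constructor <;> linarith [cos_le_one (t * x), neg_one_le_cos (t * x)])

lemma one_sub_re_charFun_eq_integral (μ : Measure ℝ) [IsProbabilityMeasure μ] (t : ℝ) :
    1 - (charFun μ t).re = ∫ x, 1 - cos (t * x) ∂μ := by
  have hcos : Integrable (fun x => cos (t * x)) μ :=
    (integrable_const 1).mono' (by fun_prop) (.of_forall fun x => abs_cos_le_one _)
  have hexp : Integrable (fun x : ℝ => Complex.exp (t * x * Complex.I)) μ :=
    (integrable_const 1).mono' (by fun_prop) (.of_forall fun x => by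
      rw [← Complex.ofReal_mul, Complex.norm_exp_ofReal_mul_I])
  have hre := integral_re hexp
  simp only [RCLike.re_to_complex] at hre
  rw [integral_sub (integrable_const 1) hcos, charFun_apply_real, ← hre]
  simp [← Complex.ofReal_mul, Complex.exp_ofReal_mul_I_re]

lemma mul_setIntegral_sq_le_one_sub_re_charFun (μ : Measure ℝ) [IsProbabilityMeasure μ] (t : ℝ) :
    2 / π ^ 2 * t ^ 2 * ∫ x in Icc (-|t|⁻¹) |t|⁻¹, x ^ 2 ∂μ ≤ 1 - (charFun μ t).re := by
  rw [one_sub_re_charFun_eq_integral, ← integral_const_mul]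
  calc ∫ x in Icc (-|t|⁻¹) |t|⁻¹, 2 / π ^ 2 * t ^ 2 * x ^ 2 ∂μ
      ≤ ∫ x in Icc (-|t|⁻¹) |t|⁻¹, 1 - cos (t * x) ∂μ := by
        refine setIntegral_mono_on ?_ (integrable_one_sub_cos_mul μ t).integrableOn
          measurableSet_Icc fun x hx => ?_
        · exact (Continuous.continuousOn (by fun_prop)).integrableOn_compact isCompact_Icc
        · have htx : |t * x| ≤ π := by
            rw [abs_mul]
            calc |t| * |x| ≤ |t| * |t|⁻¹ := by gcongr; exact abs_le.2 hx
              _ ≤ 1 := mul_inv_le_one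
              _ ≤ π := by linarith [pi_gt_three]
          linarith [cos_le_one_sub_mul_cos_sq htx, mul_pow t x 2]
    _ ≤ ∫ x, 1 - cos (t * x) ∂μ :=
        setIntegral_le_integral (integrable_one_sub_cos_mul μ t)
          (.of_forall fun x => sub_nonneg.2 (cos_le_one _))

lemma tendsto_pow_of_norm_le_one_sub {𝕜 : Type*} [NormedDivisionRing 𝕜] {z : ℕ → 𝕜}
    {ε : ℕ → ℝ} (hz : ∀ᶠ n in atTop, ‖z n‖ ≤ 1 - ε n)
    (hε : Tendsto (fun n => n * ε n) atTop atTop) :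
    Tendsto (fun n => z n ^ n) atTop (𝓝 0) := by
  refine squeeze_zero_norm' ?_ (tendsto_exp_atBot.comp (tendsto_neg_atTop_atBot.comp hε))
  filter_upwards [hz] with n hn
  calc ‖z n ^ n‖ = ‖z n‖ ^ n := norm_pow _ n
    _ ≤ exp (-ε n) ^ n := by
        gcongr
        exact hn.trans (by linarith [add_one_le_exp (-ε n)])
    _ = exp (-(n * ε n)) := by rw [← exp_nat_mul]; ring_nf

lemma isNegInvariant_withDensity {G : Type*} [MeasurableSpace G] [InvolutiveNeg G]
    [MeasurableNeg G] (μ : Measure G) [μ.IsNegInvariant] {f : G → ℝ≥0∞} (hf : Measurable f)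
    (hf_even : ∀ x, f (-x) = f x) : (μ.withDensity f).IsNegInvariant := by
  refine ⟨Measure.ext fun s hs => ?_⟩
  rw [Measure.neg, Measure.map_apply measurable_neg hs, withDensity_apply _ (measurable_neg hs),
    withDensity_apply _ hs, ← (Measure.measurePreserving_neg μ).setLIntegral_comp_preimage hs hf]
  simp_rw [hf_even]

lemma one_add_sq_rpow_neg_three_halves (x : ℝ) :
    (1 + x ^ 2) ^ (-(3 / 2) : ℝ) = ((1 + x ^ 2) * √(1 + x ^ 2))⁻¹ := by
  rw [rpow_neg (by positivity), show (3 / 2 : ℝ) = 1 + 1 / 2 by norm_num,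
    rpow_add (by positivity), rpow_one, sqrt_eq_rpow]

lemma hasDerivAt_div_sqrt_one_add_sq (x : ℝ) :
    HasDerivAt (fun y => y / √(1 + y ^ 2)) ((1 + x ^ 2) ^ (-(3 / 2) : ℝ)) x := by
  have hpos : 0 < 1 + x ^ 2 := by positivity
  have hsqrt : HasDerivAt (fun y => √(1 + y ^ 2)) (x / √(1 + x ^ 2)) x := by
    convert ((hasDerivAt_pow 2 x).const_add 1).sqrt hpos.ne' using 1
    field_simp
    ring
  refine ((hasDerivAt_id' x).div hsqrt (sqrt_pos.2 hpos).ne').congr_deriv ?_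
  rw [one_add_sq_rpow_neg_three_halves]
  field_simp
  rw [sq_sqrt hpos.le]
  ring

lemma tendsto_div_sqrt_one_add_sq_atTop :
    Tendsto (fun x => x / √(1 + x ^ 2)) atTop (𝓝 1) := by
  have h : Tendsto (fun x : ℝ => √(1 - (1 + x ^ 2)⁻¹)) atTop (𝓝 1) := by
    have h1 : Tendsto (fun x : ℝ => 1 - (1 + x ^ 2)⁻¹) atTop (𝓝 1) := by
      simpa using (tendsto_atTop_add_const_left _ 1
        (tendsto_pow_atTop (α := ℝ) two_ne_zero)).inv_tendsto_atTop.const_sub 1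
    simpa [Function.comp_def] using (continuous_sqrt.tendsto 1).comp h1
  refine h.congr' ?_
  filter_upwards [eventually_ge_atTop 0] with x hx
  rw [show 1 - (1 + x ^ 2)⁻¹ = x ^ 2 / (1 + x ^ 2) by field_simp; ring, sqrt_div (sq_nonneg x),
    sqrt_sq hx]

lemma tendsto_div_sqrt_one_add_sq_atBot :
    Tendsto (fun x => x / √(1 + x ^ 2)) atBot (𝓝 (-1)) := by
  convert (tendsto_div_sqrt_one_add_sq_atTop.comp tendsto_neg_atBot_atTop).neg using 2 with x
  simp [neg_div]

lemma integrable_one_add_sq_rpow_neg_three_halves :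
    Integrable fun x : ℝ => (1 + x ^ 2) ^ (-(3 / 2) : ℝ) := by
  convert integrable_rpow_neg_one_add_norm_sq (E := ℝ) (μ := volume) (r := 3) (by norm_num)
    using 3 with x
  · simp
  · norm_num

lemma integral_one_add_sq_rpow_neg_three_halves :
    ∫ x : ℝ, (1 + x ^ 2) ^ (-(3 / 2) : ℝ) = 2 := by
  rw [integral_of_hasDerivAt_of_tendsto hasDerivAt_div_sqrt_one_add_sq
    integrable_one_add_sq_rpow_neg_three_halves
    tendsto_div_sqrt_one_add_sq_atBot tendsto_div_sqrt_one_add_sq_atTop]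
  norm_num

def heavyTailedDensity (x : ℝ) : ℝ := 1 / 2 * (1 + x ^ 2) ^ (-(3 / 2) : ℝ)

lemma heavyTailedMeasure_eq_withDensity :
    heavyTailedMeasure = volume.withDensity fun x => ENNReal.ofReal (heavyTailedDensity x) := rfl

lemma heavyTailedDensity_nonneg (x : ℝ) : 0 ≤ heavyTailedDensity x := by
  unfold heavyTailedDensity; positivity

lemma continuous_heavyTailedDensity : Continuous heavyTailedDensity :=
  continuous_const.mul ((by fun_prop : Continuous fun x : ℝ => 1 + x ^ 2).rpow_const
    fun x => Or.inl (by positivity))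

lemma integrable_heavyTailedDensity : Integrable heavyTailedDensity :=
  integrable_one_add_sq_rpow_neg_three_halves.const_mul _

lemma integral_heavyTailedDensity : ∫ x, heavyTailedDensity x = 1 := by
  simp only [heavyTailedDensity]
  rw [integral_const_mul, integral_one_add_sq_rpow_neg_three_halves]
  norm_num

instance : IsProbabilityMeasure heavyTailedMeasure := by
  constructor
  rw [heavyTailedMeasure_eq_withDensity, withDensity_apply _ MeasurableSet.univ,
    Measure.restrict_univ, ← ofReal_integral_eq_lintegral_ofReal integrable_heavyTailedDensity
      (.of_forall heavyTailedDensity_nonneg), integral_heavyTailedDensity, ENNReal.ofReal_one]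

instance : heavyTailedMeasure.IsNegInvariant :=
  isNegInvariant_withDensity volume continuous_heavyTailedDensity.measurable.ennreal_ofReal
    fun x => by simp

lemma inv_eight_mul_le_heavyTailedDensity_mul_sq {x : ℝ} (hx : 1 ≤ x) :
    (8 * x)⁻¹ ≤ heavyTailedDensity x * x ^ 2 := by
  have hsqrt : √(1 + x ^ 2) ≤ 2 * x := sqrt_le_iff.2 ⟨by linarith, by nlinarith⟩
  have hcube : (1 + x ^ 2) * √(1 + x ^ 2) ≤ 4 * x ^ 3 := by
    calc (1 + x ^ 2) * √(1 + x ^ 2) ≤ (2 * x ^ 2) * (2 * x) := by gcongr; nlinarith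
      _ = 4 * x ^ 3 := by ring
  rw [heavyTailedDensity, one_add_sq_rpow_neg_three_halves]
  calc (8 * x)⁻¹ = 1 / 2 * (4 * x ^ 3)⁻¹ * x ^ 2 := by field_simp; ring
    _ ≤ _ := by gcongr

lemma log_div_eight_le_setIntegral_sq_heavyTailedMeasure {R : ℝ} (hR : 1 ≤ R) :
    log R / 8 ≤ ∫ x in Icc (-R) R, x ^ 2 ∂heavyTailedMeasure := by
  have hinv : ContinuousOn (fun x : ℝ => (8 * x)⁻¹) (Icc 1 R) :=
    ContinuousOn.inv₀ (f := fun x => 8 * x) (by fun_prop) fun x hx =>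
      (show (0 : ℝ) < 8 * x by linarith [hx.1]).ne'
  have hdens : Continuous fun x => heavyTailedDensity x * x ^ 2 := by
    have := continuous_heavyTailedDensity; fun_prop
  rw [heavyTailedMeasure_eq_withDensity, setIntegral_withDensity_eq_setIntegral_toReal_smul
    continuous_heavyTailedDensity.measurable.ennreal_ofReal
    (.of_forall fun _ => ENNReal.ofReal_lt_top) _ measurableSet_Icc]
  simp only [ENNReal.toReal_ofReal (heavyTailedDensity_nonneg _), smul_eq_mul]
  calc log R / 8 = ∫ x in Ioc 1 R, (8 * x)⁻¹ := by
        rw [← intervalIntegral.integral_of_le hR]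
        simp only [mul_inv, intervalIntegral.integral_const_mul,
          integral_inv_of_pos one_pos (by linarith), div_one]
        ring
    _ ≤ ∫ x in Ioc 1 R, heavyTailedDensity x * x ^ 2 :=
        setIntegral_mono_on (hinv.integrableOn_Icc.mono_set Ioc_subset_Icc_self)
          (hdens.integrableOn_Icc.mono_set Ioc_subset_Icc_self) measurableSet_Ioc
          fun x hx => inv_eight_mul_le_heavyTailedDensity_mul_sq hx.1.le
    _ ≤ ∫ x in Icc (-R) R, heavyTailedDensity x * x ^ 2 :=
        setIntegral_mono_set hdens.integrableOn_Icc
          (.of_forall fun x => mul_nonneg (heavyTailedDensity_nonneg x) (sq_nonneg x))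
          (Eventually.of_forall fun x hx => ⟨by linarith [hx.1], hx.2⟩)

lemma sq_mul_log_le_one_sub_re_charFun_heavyTailedMeasure {s : ℝ} (hs0 : s ≠ 0) (hs : |s| ≤ 1) :
    s ^ 2 * log |s|⁻¹ / (4 * π ^ 2) ≤ 1 - (charFun heavyTailedMeasure s).re := by
  have hR := log_div_eight_le_setIntegral_sq_heavyTailedMeasure ((one_le_inv₀ (abs_pos.2 hs0)).2 hs)
  calc s ^ 2 * log |s|⁻¹ / (4 * π ^ 2) = 2 / π ^ 2 * s ^ 2 * (log |s|⁻¹ / 8) := by ring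
    _ ≤ 2 / π ^ 2 * s ^ 2 * ∫ x in Icc (-|s|⁻¹) |s|⁻¹, x ^ 2 ∂heavyTailedMeasure := by gcongr
    _ ≤ 1 - (charFun heavyTailedMeasure s).re :=
        mul_setIntegral_sq_le_one_sub_re_charFun heavyTailedMeasure s

lemma heavyTailedCharFun_eq_charFun (t : ℝ) :
    heavyTailedCharFun t = charFun heavyTailedMeasure t := by
  simp only [heavyTailedCharFun, charFun_apply_real, mul_comm Complex.I]

/-- Failure of the central limit theorem for the heavy-tailed state (core of
Proposition 4.8(c)): for every `t ≠ 0`, `(φ_μ(t/√n))ⁿ → 0` as `n → ∞`. -/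
theorem heavyTailed_clt_failure (t : ℝ) (ht : t ≠ 0) :
    Tendsto (fun n : ℕ => (heavyTailedCharFun (t / Real.sqrt n)) ^ n)
      atTop (nhds 0) := by
  set s : ℕ → ℝ := fun n => t / √n
  have hsqrt : Tendsto (fun n : ℕ => √n) atTop atTop :=
    tendsto_sqrt_atTop.comp tendsto_natCast_atTop_atTop
  have hs : Tendsto s atTop (𝓝 0) := by
    simpa [s, div_eq_mul_inv] using hsqrt.inv_tendsto_atTop.const_mul t
  have hlog : Tendsto (fun n : ℕ => t ^ 2 * log (√n / |t|) / (4 * π ^ 2)) atTop atTop :=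
    ((tendsto_log_atTop.comp (hsqrt.atTop_div_const (abs_pos.2 ht))).const_mul_atTop
      (by positivity)).atTop_div_const (by positivity)
  simp_rw [heavyTailedCharFun_eq_charFun]
  refine tendsto_pow_of_norm_le_one_sub (ε := fun n => s n ^ 2 * log |s n|⁻¹ / (4 * π ^ 2))
    ?_ (hlog.congr' ?_)
  · filter_upwards [hs.eventually (eventually_norm_charFun_eq_re (μ := heavyTailedMeasure)),
      hs.abs.eventually (eventually_le_nhds (by norm_num : |(0 : ℝ)| < 1)),
      eventually_ge_atTop 1] with n hre hle hn
    have hs0 : s n ≠ 0 := div_ne_zero ht (sqrt_pos.2 (by exact_mod_cast hn)).ne'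
    rw [hre]
    linarith [sq_mul_log_le_one_sub_re_charFun_heavyTailedMeasure hs0 hle]
  · filter_upwards [eventually_ge_atTop 1] with n hn
    have hn0 : (0 : ℝ) < n := by exact_mod_cast hn
    simp only [s, div_pow, sq_sqrt hn0.le, abs_div, abs_of_pos (sqrt_pos.2 hn0), inv_div]
    field_simp
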